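/- arXiv:2604.22630 — 2 statements merged into one kernel-verified Lean document; each statement's English description precedes it below -/
import Mathlib

section
/- For every integer k ≥ 2, every k-uniform hypergraph F, and every ε > 0, there exists n₀ such that for all n ≥ n₀ we have M_F(n) ≤ (π(F) + ε)·C(n,k). -/
/-!
Let `τ` be the running time from `H0` and let `e i` be an edge added at step `i + 1`, for
`i < τ`; these are `τ` distinct `k`-sets. A copy of `F` made of such edges has two edges added
at consecutive steps (its last edge appears one step after its second-to-last one), so with
`v = |V(F)|` there are only `O(τ n^(v-k-1)) = O(n^(v-1))` such copies. On the other hand, fix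
`M` with `ex(M, F) ≤ (π(F) + ε/2) C(M, k)`. If `τ > (π(F) + ε) C(n, k)`, averaging the number
of edges `e i` inside an `M`-set shows that an `ε/2` fraction of all `M`-sets span a copy, and
hence that there are `Ω(n^v)` copies: a contradiction for large `n`. The same averaging shows
that `ex(n, F) / C(n, k)` is non-increasing, so `π(F)` is a genuine limit. If `F` has at most
one edge, the process stops after one step.
-/

open Finset Set Filter

/-- Adding the `k`-set `e` to the hypergraph with edge set `H` creates a new copy of the
hypergraph with edge set `Fe`, i.e. a copy containing `e` as an edge. -/
def CreatesCopy {ι V : Type*} (Fe : Set (Finset ι)) (H : Set (Finset V)) (e : Finset V) : Prop :=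
  ∃ f : ι ↪ V, (∀ s ∈ Fe, s.map f ∈ H ∪ {e}) ∧ ∃ s ∈ Fe, s.map f = e

/-- One step of the `F`-bootstrap percolation process for `k`-graphs. -/
def bootStep {ι V : Type*} (k : ℕ) (Fe : Set (Finset ι)) (H : Set (Finset V)) :
    Set (Finset V) :=
  H ∪ {e | e.card = k ∧ CreatesCopy Fe H e}

/-- The `F`-bootstrap percolation process starting with `H0`. -/
def procSeq {ι V : Type*} (k : ℕ) (Fe : Set (Finset ι)) (H0 : Set (Finset V)) :
    ℕ → Set (Finset V)
  | 0 => H0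
  | i + 1 => bootStep k Fe (procSeq k Fe H0 i)

/-- The running time of the `F`-bootstrap percolation process starting with `H0`. -/
noncomputable def runTime {ι V : Type*} (k : ℕ) (Fe : Set (Finset ι))
    (H0 : Set (Finset V)) : ℕ :=
  sInf {i | procSeq k Fe H0 i = procSeq k Fe H0 (i + 1)}

/-- The maximum running time over all `k`-uniform starting hypergraphs on `n` vertices. -/
noncomputable def maxRunTime {ι : Type*} (k : ℕ) (Fe : Set (Finset ι)) (n : ℕ) : ℕ :=
  sSup {t | ∃ H0 : Set (Finset (Fin n)), (∀ e ∈ H0, e.card = k) ∧ t = runTime k Fe H0}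

/-- `H` contains a copy of the hypergraph with edge set `Fe`. -/
def ContainsCopy {ι V : Type*} (Fe : Set (Finset ι)) (H : Set (Finset V)) : Prop :=
  ∃ f : ι ↪ V, ∀ s ∈ Fe, s.map f ∈ H

/-- The Turán extremal number `ex(n, F)` for `k`-graphs. -/
noncomputable def exNum {ι : Type*} (k : ℕ) (Fe : Set (Finset ι)) (n : ℕ) : ℕ :=
  sSup {m | ∃ H : Set (Finset (Fin n)),
    (∀ e ∈ H, e.card = k) ∧ ¬ ContainsCopy Fe H ∧ m = H.ncard}

/-- The Turán density `π(F)`. -/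
noncomputable def turanDensity {ι : Type*} (k : ℕ) (Fe : Set (Finset ι)) : ℝ :=
  limUnder atTop (fun n : ℕ => (exNum k Fe n : ℝ) / (n.choose k : ℝ))

/-- The copies of `F` in `H`, as subhypergraphs: pairs of a vertex set and an edge set. -/
def copies {ι V : Type*} [Fintype ι] (Fe : Set (Finset ι)) (H : Set (Finset V)) :
    Set (Finset V × Set (Finset V)) :=
  {p | ∃ f : ι ↪ V, p.1 = Finset.univ.map f ∧ p.2 = (fun s => s.map f) '' Fe ∧
    ∀ s ∈ Fe, s.map f ∈ H}

/-- The step of the process at which the edge `e` is added (`0` if `e ∈ H0`). -/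
noncomputable def stepOf {ι V : Type*} (k : ℕ) (Fe : Set (Finset ι)) (H0 : Set (Finset V))
    (e : Finset V) : ℕ :=
  sInf {s | e ∈ procSeq k Fe H0 s}

/-- `i(D)`: the largest step index whose chosen edge belongs to the edge set `Ed`. -/
noncomputable def idxMax {V : Type*} (e : ℕ → Finset V) (τ : ℕ) (Ed : Set (Finset V)) : ℕ :=
  sSup {i | i ∈ Set.Icc 1 τ ∧ e i ∈ Ed}

/-- `j(D)`: the largest step index whose chosen edge belongs to `Ed` minus `e_{i(D)}`. -/
noncomputable def idxSnd {V : Type*} (e : ℕ → Finset V) (τ : ℕ) (Ed : Set (Finset V)) : ℕ :=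
  sSup {j | j ∈ Set.Icc 1 τ ∧ e j ∈ Ed \ {e (idxMax e τ Ed)}}

/-- The type (1–4) of a copy `D` with completing edge `eD`, as in the paper. -/
def copyType {ι V : Type*} (k : ℕ) (Fe : Set (Finset ι)) (H0 : Set (Finset V))
    (e : ℕ → Finset V) (τ : ℕ) (eD : Finset V) (Ed : Set (Finset V)) (α : ℕ) : Prop :=
  (α = 1 ∧ stepOf k Fe H0 eD ≤ idxSnd e τ Ed) ∨
  (α = 2 ∧ idxSnd e τ Ed < stepOf k Fe H0 eD ∧ stepOf k Fe H0 eD < idxMax e τ Ed) ∨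
  (α = 3 ∧ idxMax e τ Ed < stepOf k Fe H0 eD) ∨
  (α = 4 ∧ stepOf k Fe H0 eD = idxMax e τ Ed)

section Percolation

variable {ι V : Type*} {k : ℕ} {Fe : Set (Finset ι)} {H0 : Set (Finset V)}

lemma procSeq_monotone : Monotone (procSeq k Fe H0) :=
  monotone_nat_of_le_succ fun _ => Set.subset_union_left

lemma card_eq_of_mem_procSeq_succ {e : Finset V} {i : ℕ} (h : e ∈ procSeq k Fe H0 (i + 1))
    (h' : e ∉ procSeq k Fe H0 i) : e.card = k :=
  (h.resolve_left h').1

lemma mem_procSeq_succ_of_copy {f : ι ↪ V} {s₀ : Finset ι} (hs₀ : s₀ ∈ Fe)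
    (hcard : (s₀.map f).card = k) {j : ℕ}
    (hothers : ∀ s ∈ Fe, s.map f ≠ s₀.map f → s.map f ∈ procSeq k Fe H0 j) :
    s₀.map f ∈ procSeq k Fe H0 (j + 1) := by
  refine Or.inr ⟨hcard, f, fun s hs => ?_, s₀, hs₀, rfl⟩
  by_cases heq : s.map f = s₀.map f
  · exact Or.inr heq
  · exact Or.inl (hothers s hs heq)

lemma createsCopy_iff_of_subsingleton (hFe : Fe.Subsingleton) {H : Set (Finset V)}
    {e : Finset V} : CreatesCopy Fe H e ↔ ∃ f : ι ↪ V, ∃ s ∈ Fe, s.map f = e := by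
  refine ⟨fun ⟨f, _, h⟩ => ⟨f, h⟩, fun ⟨f, s, hs, hse⟩ => ⟨f, fun t ht => ?_, s, hs, hse⟩⟩
  rw [hFe ht hs, hse]
  exact Or.inr rfl

lemma runTime_le_one_of_subsingleton (hFe : Fe.Subsingleton) : runTime k Fe H0 ≤ 1 := by
  refine Nat.sInf_le (Set.Subset.antisymm (procSeq_monotone (Nat.le_succ 1)) ?_)
  simp only [procSeq, bootStep, createsCopy_iff_of_subsingleton hFe]
  grind

def IsNewEdgeSeq (k : ℕ) (Fe : Set (Finset ι)) (H0 : Set (Finset V)) (τ : ℕ)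
    (e : ℕ → Finset V) : Prop :=
  ∀ i < τ, e i ∈ procSeq k Fe H0 (i + 1) ∧ e i ∉ procSeq k Fe H0 i

lemma exists_isNewEdgeSeq_runTime : ∃ e, IsNewEdgeSeq k Fe H0 (runTime k Fe H0) e := by
  have h : ∀ i < runTime k Fe H0, ∃ e, e ∈ procSeq k Fe H0 (i + 1) ∧ e ∉ procSeq k Fe H0 i := by
    intro i hi
    have hne : procSeq k Fe H0 i ≠ procSeq k Fe H0 (i + 1) := Nat.notMem_of_lt_sInf hi
    exact Set.exists_of_ssubset ((procSeq_monotone i.le_succ).ssubset_of_ne hne)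
  choose! e he using h
  exact ⟨e, he⟩

end Percolation

namespace IsNewEdgeSeq

open Finset

variable {ι V : Type*} {k : ℕ} {Fe : Set (Finset ι)} {H0 : Set (Finset V)} {τ : ℕ}
  {e : ℕ → Finset V}

lemma card_eq (he : IsNewEdgeSeq k Fe H0 τ e) {i : ℕ} (hi : i < τ) : #(e i) = k :=
  card_eq_of_mem_procSeq_succ (he i hi).1 (he i hi).2

lemma injOn (he : IsNewEdgeSeq k Fe H0 τ e) : Set.InjOn e (Set.Iio τ) := by
  have key : ∀ i j, i < j → j < τ → e i ≠ e j := fun i j hij hj heq =>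
    (he j hj).2 (procSeq_monotone hij (heq ▸ (he i (hij.trans hj)).1))
  intro i hi j hj hij
  rcases lt_trichotomy i j with h | h | h
  · exact absurd hij (key i j h hj)
  · exact h
  · exact absurd hij.symm (key j i h hi)

lemma card_image [DecidableEq V] (he : IsNewEdgeSeq k Fe H0 τ e) : #((range τ).image e) = τ := by
  rw [card_image_of_injOn (by simpa using he.injOn), card_range]

lemma card_eq_of_mem_image [DecidableEq V] (he : IsNewEdgeSeq k Fe H0 τ e) :
    ∀ x ∈ (range τ).image e, #x = k := by
  intro x hx
  obtain ⟨i, hi, rfl⟩ := mem_image.1 hx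
  exact he.card_eq (Finset.mem_range.1 hi)

lemma le_choose [Fintype V] [DecidableEq V] (he : IsNewEdgeSeq k Fe H0 τ e) :
    τ ≤ (Fintype.card V).choose k := by
  rw [← he.card_image, ← card_univ, ← card_powersetCard]
  exact Finset.card_le_card fun x hx =>
    mem_powersetCard.2 ⟨subset_univ _, he.card_eq_of_mem_image x hx⟩

/-- Once all edges of the copy but the last one are present, the last one is added in the
next step. -/
lemma exists_consecutive (he : IsNewEdgeSeq k Fe H0 τ e) (hFe : Fe.Nontrivial) {f : ι ↪ V}
    (hf : ∀ s ∈ Fe, ∃ i < τ, s.map f = e i) :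
    ∃ m, m + 1 < τ ∧ (∃ s ∈ Fe, s.map f = e m) ∧ ∃ s ∈ Fe, s.map f = e (m + 1) := by
  classical
  obtain ⟨s₁, hs₁, s₂, hs₂, hs₁₂⟩ := hFe
  set I := (range τ).filter fun i => ∃ s ∈ Fe, s.map f = e i
  have mem_I : ∀ {s}, s ∈ Fe → ∃ i ∈ I, s.map f = e i := fun {s} hs => by
    obtain ⟨i, hi, hsi⟩ := hf s hs
    exact ⟨i, mem_filter.2 ⟨mem_range.2 hi, s, hs, hsi⟩, hsi⟩
  obtain ⟨i₁, hi₁, h₁⟩ := mem_I hs₁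
  obtain ⟨i₂, hi₂, h₂⟩ := mem_I hs₂
  have hne : I.Nonempty := ⟨i₁, hi₁⟩
  set top := I.max' hne
  have hne' : (I.erase top).Nonempty := by
    by_cases h : i₁ = top
    · refine ⟨i₂, mem_erase.2 ⟨fun h' => hs₁₂ (map_injective f ?_), hi₂⟩⟩
      rw [h₁, h₂, h, h']
    · exact ⟨i₁, mem_erase.2 ⟨h, hi₁⟩⟩
  set m := (I.erase top).max' hne'
  obtain ⟨htop, s₀, hs₀, h₀⟩ := mem_filter.1 (I.max'_mem hne)
  have htop_τ : top < τ := mem_range.1 htop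
  have hm_lt : m < top := lt_of_le_of_ne (I.le_max' m (mem_of_mem_erase (max'_mem _ _)))
    (ne_of_mem_erase (max'_mem _ _))
  have hnext : e top ∈ procSeq k Fe H0 (m + 1 + 1) := by
    rw [← h₀]
    refine mem_procSeq_succ_of_copy hs₀ (h₀ ▸ he.card_eq htop_τ) fun s hs hs₀' => ?_
    obtain ⟨i, hi, hsi⟩ := mem_I hs
    have hi_top : i ≠ top := by
      rintro rfl
      exact hs₀' (hsi.trans h₀.symm)
    rw [hsi]
    exact procSeq_monotone (Nat.succ_le_succ ((I.erase top).le_max' i (mem_erase.2 ⟨hi_top, hi⟩)))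
      (he i (mem_range.1 (mem_filter.1 hi).1)).1
  have htop_eq : top = m + 1 := by
    by_contra h
    exact (he top htop_τ).2 (procSeq_monotone (by omega) hnext)
  exact ⟨m, htop_eq ▸ htop_τ, (mem_filter.1 (mem_of_mem_erase (max'_mem _ hne'))).2,
    htop_eq ▸ ⟨s₀, hs₀, h₀⟩⟩

end IsNewEdgeSeq

section RunTime

open Finset

variable {ι V : Type*} {k : ℕ} {Fe : Set (Finset ι)}

lemma runTime_le_choose [Fintype V] [DecidableEq V] (H0 : Set (Finset V)) :
    runTime k Fe H0 ≤ (Fintype.card V).choose k := by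
  obtain ⟨e, he⟩ := exists_isNewEdgeSeq_runTime (k := k) (Fe := Fe) (H0 := H0)
  exact he.le_choose

lemma maxRunTime_le {n : ℕ} {B : ℝ} (h : ∀ H0 : Set (Finset (Fin n)),
    (∀ e ∈ H0, e.card = k) → (runTime k Fe H0 : ℝ) ≤ B) : (maxRunTime k Fe n : ℝ) ≤ B := by
  set T := {t | ∃ H0 : Set (Finset (Fin n)), (∀ e ∈ H0, e.card = k) ∧ t = runTime k Fe H0}
  have hbdd : BddAbove T :=
    ⟨n.choose k, by rintro _ ⟨H0, -, rfl⟩; simpa using runTime_le_choose H0⟩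
  obtain ⟨H0, hH0, heq⟩ := Nat.sSup_mem (⟨_, ∅, by simp, rfl⟩ : T.Nonempty) hbdd
  rw [maxRunTime, heq]
  exact h H0 hH0

end RunTime

section EmbeddingCount

open Finset

lemma add_one_le_card_union_of_ne {α : Type*} [DecidableEq α] {s t : Finset α} {k : ℕ}
    (hst : s ≠ t) (hs : #s = k) (ht : #t = k) : k + 1 ≤ #(s ∪ t) := by
  by_contra! hlt
  exact hst (Finset.eq_of_subset_of_card_le subset_union_left (by omega) |>.trans
    (Finset.eq_of_subset_of_card_le subset_union_right (by omega)).symm)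

variable {ι V : Type*} [Fintype ι] [DecidableEq ι] [Fintype V] [DecidableEq V]

lemma card_filter_embedding_mapsTo_le (U : Finset ι) (T : Finset V) :
    #{f : ι ↪ V | ∀ x ∈ U, f x ∈ T} ≤
      #T ^ #U * Fintype.card V ^ (Fintype.card ι - #U) := by
  let restrict : (ι ↪ V) → (U → V) × ((Uᶜ : Finset ι) → V) :=
    fun f => (fun x => f x, fun x => f x)
  have hinj : Set.InjOn restrict {f | ∀ x ∈ U, f x ∈ T} := by
    intro f₁ _ f₂ _ h
    ext x
    by_cases hx : x ∈ U
    · exact congrFun (congrArg Prod.fst h) ⟨x, hx⟩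
    · exact congrFun (congrArg Prod.snd h) ⟨x, mem_compl.2 hx⟩
  calc #{f : ι ↪ V | ∀ x ∈ U, f x ∈ T}
      ≤ #(Fintype.piFinset (fun _ : U => T) ×ˢ (univ : Finset ((Uᶜ : Finset ι) → V))) := by
        refine card_le_card_of_injOn restrict (fun f hf => ?_) (by simpa using hinj)
        simp only [coe_filter, Set.mem_ofPred_eq] at hf
        simp [restrict, hf]
    _ = #T ^ #U * Fintype.card V ^ (Fintype.card ι - #U) := by
        simp

lemma card_filter_embedding_map_eq_le {k : ℕ} {s₁ s₂ : Finset ι} (hs : s₁ ≠ s₂)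
    {a b : Finset V} (ha : #a = k) (hb : #b = k) :
    #{f : ι ↪ V | s₁.map f = a ∧ s₂.map f = b} ≤
      (2 * k) ^ (2 * k) * Fintype.card V ^ (Fintype.card ι - (k + 1)) := by
  rcases Finset.eq_empty_or_nonempty {f : ι ↪ V | s₁.map f = a ∧ s₂.map f = b} with h | ⟨f₀, hf₀⟩
  · simp [h]
  obtain ⟨h₁, h₂⟩ := (mem_filter.1 hf₀).2
  have hs₁ : #s₁ = k := by rw [← ha, ← h₁, card_map]
  have hs₂ : #s₂ = k := by rw [← hb, ← h₂, card_map]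
  have hU := add_one_le_card_union_of_ne hs hs₁ hs₂
  have hU' : #(s₁ ∪ s₂) ≤ 2 * k := (Finset.card_union_le _ _).trans (by omega)
  have hT : #(a ∪ b) ≤ 2 * k := (Finset.card_union_le _ _).trans (by omega)
  have hV : 1 ≤ Fintype.card V := by
    have := card_le_univ a
    omega
  calc #{f : ι ↪ V | s₁.map f = a ∧ s₂.map f = b}
      ≤ #{f : ι ↪ V | ∀ x ∈ s₁ ∪ s₂, f x ∈ a ∪ b} := by
        refine Finset.card_le_card fun f hf => mem_filter.2 ⟨mem_univ f, fun x hx => ?_⟩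
        obtain ⟨hf₁, hf₂⟩ := (mem_filter.1 hf).2
        rcases mem_union.1 hx with hx | hx
        · exact mem_union_left _ (hf₁ ▸ mem_map_of_mem f hx)
        · exact mem_union_right _ (hf₂ ▸ mem_map_of_mem f hx)
    _ ≤ #(a ∪ b) ^ #(s₁ ∪ s₂) * Fintype.card V ^ (Fintype.card ι - #(s₁ ∪ s₂)) :=
        card_filter_embedding_mapsTo_le _ _
    _ ≤ (2 * k) ^ (2 * k) * Fintype.card V ^ (Fintype.card ι - (k + 1)) := by
        gcongr
        omega

variable {k : ℕ} {Fe : Set (Finset ι)} {H0 : Set (Finset V)} {τ : ℕ} {e : ℕ → Finset V}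

open scoped Classical in
lemma IsNewEdgeSeq.card_copies_le (he : IsNewEdgeSeq k Fe H0 τ e) (hFe : Fe.Nontrivial) :
    #{f : ι ↪ V | ∀ s ∈ Fe, s.map f ∈ (range τ).image e} ≤ τ * (4 ^ Fintype.card ι *
      ((2 * k) ^ (2 * k) * Fintype.card V ^ (Fintype.card ι - (k + 1)))) := by
  set B := (2 * k) ^ (2 * k) * Fintype.card V ^ (Fintype.card ι - (k + 1))
  let pairs : Finset (Finset ι × Finset ι) := Finset.univ ×ˢ Finset.univ
  let copiesAt : ℕ → Finset (ι ↪ V) := fun m =>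
    pairs.biUnion fun p => {f : ι ↪ V | p.1.map f = e m ∧ p.2.map f = e (m + 1)}
  have hsub : ({f : ι ↪ V | ∀ s ∈ Fe, s.map f ∈ (range τ).image e} : Finset _) ⊆
      (range (τ - 1)).biUnion copiesAt := by
    intro f hf
    have hf' : ∀ s ∈ Fe, ∃ i < τ, s.map f = e i := fun s hs => by
      obtain ⟨i, hi, hsi⟩ := mem_image.1 ((mem_filter.1 hf).2 s hs)
      exact ⟨i, mem_range.1 hi, hsi.symm⟩
    obtain ⟨m, hm, ⟨s, -, hs⟩, ⟨s', -, hs'⟩⟩ := he.exists_consecutive hFe hf'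
    exact mem_biUnion.2 ⟨m, mem_range.2 (by omega), mem_biUnion.2
      ⟨(s, s'), mem_product.2 ⟨mem_univ _, mem_univ _⟩, mem_filter.2 ⟨mem_univ _, hs, hs'⟩⟩⟩
  have hpair : ∀ m ∈ range (τ - 1), ∀ p ∈ pairs,
      #{f : ι ↪ V | p.1.map f = e m ∧ p.2.map f = e (m + 1)} ≤ B := by
    intro m hm p _
    have hm : m + 1 < τ := by have := mem_range.1 hm; omega
    by_cases hp : p.1 = p.2
    · have hne : e m ≠ e (m + 1) := fun h => by
        have := he.injOn (Set.mem_Iio.2 (by omega)) (Set.mem_Iio.2 hm) h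
        omega
      rw [Finset.filter_false_of_mem fun f _ ⟨h₁, h₂⟩ => hne (h₁.symm.trans (hp ▸ h₂))]
      exact Nat.zero_le _
    · exact card_filter_embedding_map_eq_le hp (he.card_eq (by omega)) (he.card_eq hm)
  calc #{f : ι ↪ V | ∀ s ∈ Fe, s.map f ∈ (range τ).image e}
      ≤ #((range (τ - 1)).biUnion copiesAt) := Finset.card_le_card hsub
    _ ≤ #(range (τ - 1)) * (#pairs * B) := card_biUnion_le_card_mul _ _ _ fun m hm =>
        card_biUnion_le_card_mul _ _ _ (hpair m hm)
    _ ≤ τ * (4 ^ Fintype.card ι * B) := by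
        simp only [card_range, pairs, card_product, card_univ, Fintype.card_finset, ← mul_pow]
        gcongr
        · exact Nat.sub_le _ _
        · norm_num

end EmbeddingCount

lemma bddAbove_exNum_set {ι : Type*} (k : ℕ) (Fe : Set (Finset ι)) (n : ℕ) :
    BddAbove {m | ∃ H : Set (Finset (Fin n)),
      (∀ e ∈ H, e.card = k) ∧ ¬ ContainsCopy Fe H ∧ m = H.ncard} :=
  ⟨Nat.card (Finset (Fin n)), by rintro _ ⟨H, -, -, rfl⟩; exact Set.ncard_le_card H⟩

/-- All of `univ.map f`, isolated vertices of `F` included, lies in `S`: a copy in `G[S]` in the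
sense of `ex(#S, F)`. -/
def SpansCopy {ι V : Type*} [Fintype ι] (Fe : Set (Finset ι)) (G : Set (Finset V))
    (S : Finset V) : Prop :=
  ∃ f : ι ↪ V, Finset.univ.map f ⊆ S ∧ ∀ s ∈ Fe, s.map f ∈ G

section Averaging

open Finset

variable {ι V : Type*} [Fintype ι] {k : ℕ} {Fe : Set (Finset ι)}

lemma SpansCopy.mono {G G' : Set (Finset V)} {S : Finset V} (h : SpansCopy Fe G S)
    (hG : G ⊆ G') : SpansCopy Fe G' S :=
  let ⟨f, hfS, hf⟩ := h
  ⟨f, hfS, fun s hs => hG (hf s hs)⟩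

lemma card_le_exNum [DecidableEq V] {S : Finset V} {A : Finset (Finset V)}
    (hA : ∀ e ∈ A, e ⊆ S ∧ #e = k) (hfree : ¬ SpansCopy Fe ↑A S) : #A ≤ exNum k Fe #S := by
  let g : Fin #S ↪ V := S.equivFin.symm.toEmbedding.trans (Function.Embedding.subtype _)
  have hg : univ.map g = S := by
    ext x
    simpa [g] using ⟨fun ⟨b, hb⟩ => hb ▸ (S.equivFin.symm b).2,
      fun h => ⟨S.equivFin ⟨x, h⟩, by simp⟩⟩
  let A' : Set (Finset (Fin #S)) := (·.map g) ⁻¹' A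
  have hA' : (·.map g) '' A' = A := Set.image_preimage_eq_of_subset fun e he => by
    obtain ⟨u, -, rfl⟩ := subset_map_iff.1 (hg ▸ (hA e he).1)
    exact ⟨u, rfl⟩
  refine le_csSup (bddAbove_exNum_set _ _ _) ⟨A', fun e he => ?_, ?_, ?_⟩
  · rw [← card_map g]
    exact (hA _ he).2
  · rintro ⟨f, hf⟩
    refine hfree ⟨f.trans g, ?_, fun s hs => ?_⟩
    · rw [← Finset.map_map]
      exact (map_subset_map.2 (subset_univ _)).trans hg.subset
    · rw [← Finset.map_map]
      exact hf s hs
  · rw [← Set.ncard_coe_finset, ← hA', Set.ncard_image_of_injective _ (map_injective g)]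

variable [Fintype V] [DecidableEq V]

lemma sum_card_filter_subset {G : Finset (Finset V)} (hG : ∀ e ∈ G, #e = k) {M : ℕ}
    (hkM : k ≤ M) : ∑ S ∈ powersetCard M univ, #{e ∈ G | e ⊆ S} =
      #G * (Fintype.card V - k).choose (M - k) := by
  have := sum_card_bipartiteAbove_eq_sum_card_bipartiteBelow
    (r := fun (e S : Finset V) => e ⊆ S) (s := G) (t := powersetCard M univ)
  simp only [bipartiteAbove, bipartiteBelow] at this
  rw [← this, sum_const_nat fun e he => ?_]
  rw [card_filter_powersetCard_subset e univ M (subset_univ e) (hG e he ▸ hkM), card_univ,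
    hG e he]

open scoped Classical in
/-- Double counting pairs `e ⊆ S`: an `M`-set spanning no copy of `F` contains at most
`ex(M, F)` edges of `G`, any other at most `C(M, k)`. -/
lemma card_mul_choose_le {G : Finset (Finset V)} (hG : ∀ e ∈ G, #e = k) {M : ℕ}
    (hkM : k ≤ M) : #G * (Fintype.card V - k).choose (M - k) ≤
      #{S ∈ powersetCard M univ | SpansCopy Fe (G : Set (Finset V)) S} * M.choose k +
        (Fintype.card V).choose M * exNum k Fe M := by
  rw [← sum_card_filter_subset hG hkM]
  calc ∑ S ∈ powersetCard M univ, #{e ∈ G | e ⊆ S}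
      ≤ ∑ S ∈ powersetCard M univ,
          ((if SpansCopy Fe (G : Set (Finset V)) S then M.choose k else 0) + exNum k Fe M) := by
        refine sum_le_sum fun S hS => ?_
        have hSM : #S = M := (mem_powersetCard.1 hS).2
        split_ifs with hspan
        · refine le_add_right ((Finset.card_le_card fun e he => ?_).trans
            (hSM ▸ card_powersetCard k S).le)
          exact mem_powersetCard.2 ⟨(mem_filter.1 he).2, hG e (mem_filter.1 he).1⟩
        · rw [zero_add, ← hSM]
          refine card_le_exNum (fun e he => ⟨(mem_filter.1 he).2, hG e (mem_filter.1 he).1⟩)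
            fun h => hspan (h.mono (coe_subset.2 (filter_subset _ G)))
    _ = _ := by
        rw [sum_add_distrib, sum_ite, sum_const_zero, sum_const, sum_const, card_powersetCard,
          card_univ, smul_eq_mul, smul_eq_mul, add_zero]

open scoped Classical in
lemma mul_choose_le_card_spansCopy {G : Finset (Finset V)} (hG : ∀ e ∈ G, #e = k) {M : ℕ}
    (hkM : k ≤ M) {d δ : ℝ} (hM : (exNum k Fe M : ℝ) ≤ d * M.choose k)
    (hGcard : (d + δ) * (Fintype.card V).choose k ≤ #G) :
    δ * (Fintype.card V).choose M ≤
      #{S ∈ powersetCard M univ | SpansCopy Fe (G : Set (Finset V)) S} := by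
  set N := Fintype.card V
  have hcount : (#G : ℝ) * (N - k).choose (M - k) ≤
      #{S ∈ powersetCard M univ | SpansCopy Fe (G : Set (Finset V)) S} * M.choose k +
        N.choose M * exNum k Fe M := by
    exact_mod_cast card_mul_choose_le hG hkM
  have hid : (N.choose M : ℝ) * M.choose k = N.choose k * (N - k).choose (M - k) := by
    exact_mod_cast Nat.choose_mul hkM
  have hMk : (0 : ℝ) < M.choose k := by exact_mod_cast Nat.choose_pos hkM
  refine le_of_mul_le_mul_right ?_ hMk
  linear_combination mul_le_mul_of_nonneg_right hGcard (Nat.cast_nonneg ((N - k).choose (M - k)))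
    + hcount + mul_le_mul_of_nonneg_left hM (Nat.cast_nonneg (N.choose M)) + (d + δ) * hid

open scoped Classical in
lemma card_spansCopy_le [DecidableEq ι] (G : Finset (Finset V)) {M : ℕ}
    (hvM : Fintype.card ι ≤ M) :
    #{S ∈ powersetCard M univ | SpansCopy Fe (G : Set (Finset V)) S} ≤
      #{f : ι ↪ V | ∀ s ∈ Fe, s.map f ∈ G} *
        (Fintype.card V - Fintype.card ι).choose (M - Fintype.card ι) := by
  refine (Finset.card_le_card fun S hS => ?_).trans (card_biUnion_le_card_mul _
    (fun f => {S ∈ powersetCard M univ | univ.map f ⊆ S}) _ fun f _ => ?_)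
  · obtain ⟨hSM, f, hfS, hf⟩ := mem_filter.1 hS
    exact mem_biUnion.2 ⟨f, mem_filter.2 ⟨mem_univ f, hf⟩, mem_filter.2 ⟨hSM, hfS⟩⟩
  · rw [card_filter_powersetCard_subset _ _ _ (subset_univ _) (by simpa using hvM)]
    simp

end Averaging

section TuranDensity

open Finset Topology

variable {ι : Type*} [Fintype ι] {k : ℕ} {Fe : Set (Finset ι)}

lemma exNum_mul_choose_le {M : ℕ} (hkM : k ≤ M) (N : ℕ) :
    exNum k Fe N * (N - k).choose (M - k) ≤ N.choose M * exNum k Fe M := by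
  rcases Set.eq_empty_or_nonempty {m | ∃ H : Set (Finset (Fin N)),
      (∀ e ∈ H, e.card = k) ∧ ¬ ContainsCopy Fe H ∧ m = H.ncard} with h | h
  · simp [exNum, h]
  obtain ⟨H, hH, hfree, hcard⟩ := Nat.sSup_mem h (bddAbove_exNum_set k Fe N)
  classical
  have hG : ∀ e ∈ H.toFinite.toFinset, #e = k := fun e he => hH e (by simpa using he)
  have hspan : ∀ S, ¬ SpansCopy Fe ↑H.toFinite.toFinset S := fun S ⟨f, _, hf⟩ =>
    hfree ⟨f, fun s hs => by simpa using hf s hs⟩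
  have := card_mul_choose_le (Fe := Fe) hG hkM
  simp only [hspan, filter_false, Finset.card_empty, zero_mul, zero_add, Fintype.card_fin,
    ← Set.ncard_eq_toFinset_card] at this
  rwa [exNum, hcard]

lemma antitoneOn_exNum_div_choose :
    AntitoneOn (fun n => (exNum k Fe n : ℝ) / n.choose k) (Set.Ici k) := by
  intro m (hm : k ≤ m) n (hn : k ≤ n) (hmn : m ≤ n)
  rw [div_le_div_iff₀ (mod_cast Nat.choose_pos hn) (mod_cast Nat.choose_pos hm)]
  have hpos : 0 < (n - k).choose (m - k) := Nat.choose_pos (by omega)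
  have key : exNum k Fe n * m.choose k * (n - k).choose (m - k) ≤
      exNum k Fe m * n.choose k * (n - k).choose (m - k) :=
    calc exNum k Fe n * m.choose k * (n - k).choose (m - k)
        = exNum k Fe n * (n - k).choose (m - k) * m.choose k := by ring
      _ ≤ n.choose m * exNum k Fe m * m.choose k :=
          Nat.mul_le_mul_right _ (exNum_mul_choose_le hm n)
      _ = exNum k Fe m * (n.choose m * m.choose k) := by ring
      _ = exNum k Fe m * n.choose k * (n - k).choose (m - k) := by
          rw [Nat.choose_mul hm]; ring
  exact_mod_cast Nat.le_of_mul_le_mul_right key hpos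

theorem tendsto_exNum_div_choose :
    Tendsto (fun n => (exNum k Fe n : ℝ) / n.choose k) atTop (𝓝 (turanDensity k Fe)) := by
  have h := Real.tendsto_atTop_csInf_of_antitoneOn_bddBelow_nat_Ici
    (antitoneOn_exNum_div_choose (k := k) (Fe := Fe))
    ⟨0, by rintro _ ⟨n, -, rfl⟩; dsimp only; positivity⟩
  rwa [turanDensity, h.limUnder_eq]

lemma turanDensity_nonneg : 0 ≤ turanDensity k Fe :=
  ge_of_tendsto' tendsto_exNum_div_choose fun n => by positivity

end TuranDensity

section Asymptotics

lemma eventually_mul_pow_lt_choose {v : ℕ} (hv : 1 ≤ v) (A : ℝ) :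
    ∀ᶠ n : ℕ in atTop, A * (n : ℝ) ^ (v - 1) < n.choose v := by
  obtain ⟨N, hN⟩ := exists_nat_gt (2 ^ v * v.factorial * A)
  filter_upwards [eventually_ge_atTop (2 * v), eventually_gt_atTop N] with n h2v hNn
  have hn : (0 : ℝ) < n := by exact_mod_cast (show 0 < n by omega)
  have hc : (0 : ℝ) < 2 ^ v * v.factorial := by positivity
  have hhalf : (n : ℝ) / 2 ≤ ((n + 1 - v : ℕ) : ℝ) := by
    rw [Nat.cast_sub (by omega)]
    push_cast
    have : (2 * v : ℝ) ≤ n := by exact_mod_cast h2v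
    linarith
  have hA : A < n / (2 ^ v * v.factorial) := by
    rw [lt_div_iff₀ hc]
    have : (N : ℝ) < n := by exact_mod_cast hNn
    linarith
  calc A * (n : ℝ) ^ (v - 1) < n / (2 ^ v * v.factorial) * (n : ℝ) ^ (v - 1) := by gcongr
    _ = ((n : ℝ) / 2) ^ v / v.factorial := by
        rw [div_pow, ← Nat.sub_add_cancel hv, pow_succ', Nat.add_sub_cancel]
        field_simp
        rw [pow_succ']
    _ ≤ ((n + 1 - v : ℕ) : ℝ) ^ v / v.factorial := by gcongr
    _ ≤ n.choose v := Nat.pow_le_choose v n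

lemma eventually_mul_pow_mul_choose_lt {v M : ℕ} (hv : 1 ≤ v) (hvM : v ≤ M) (C : ℝ) {δ : ℝ}
    (hδ : 0 < δ) : ∀ᶠ n : ℕ in atTop,
      C * (n : ℝ) ^ (v - 1) * (n - v).choose (M - v) < δ * n.choose M := by
  filter_upwards [eventually_mul_pow_lt_choose hv (C * M.choose v / δ), eventually_ge_atTop M]
    with n hlt hMn
  have hMv : (0 : ℝ) < M.choose v := by exact_mod_cast Nat.choose_pos hvM
  have hP : (0 : ℝ) < (n - v).choose (M - v) := by exact_mod_cast Nat.choose_pos (by omega)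
  have hid : (n.choose M : ℝ) * M.choose v = n.choose v * (n - v).choose (M - v) := by
    exact_mod_cast Nat.choose_mul hvM
  rw [div_mul_eq_mul_div, div_lt_iff₀ hδ] at hlt
  refine lt_of_mul_lt_mul_right ?_ hMv.le
  calc C * (n : ℝ) ^ (v - 1) * (n - v).choose (M - v) * M.choose v
      = C * M.choose v * (n : ℝ) ^ (v - 1) * (n - v).choose (M - v) := by ring
    _ < n.choose v * δ * (n - v).choose (M - v) := by gcongr
    _ = δ * n.choose M * M.choose v := by rw [mul_assoc δ, hid]; ring

end Asymptotics

section Final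

open Finset

variable {ι : Type*} [Fintype ι] {k : ℕ} {Fe : Set (Finset ι)}

lemma add_one_le_card_of_nontrivial (hFe : ∀ s ∈ Fe, #s = k) (hnt : Fe.Nontrivial) :
    k + 1 ≤ Fintype.card ι := by
  classical
  obtain ⟨s₁, hs₁, s₂, hs₂, hs⟩ := hnt
  exact (add_one_le_card_union_of_ne hs (hFe s₁ hs₁) (hFe s₂ hs₂)).trans (card_le_univ _)

open scoped Classical in
lemma IsNewEdgeSeq.card_copies_le_pow {V : Type*} [Fintype V] [DecidableEq V]
    {H0 : Set (Finset V)} {τ : ℕ} {e : ℕ → Finset V} (he : IsNewEdgeSeq k Fe H0 τ e)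
    (hFe : ∀ s ∈ Fe, #s = k) (hnt : Fe.Nontrivial) :
    #{f : ι ↪ V | ∀ s ∈ Fe, s.map f ∈ (range τ).image e} ≤
      4 ^ Fintype.card ι * (2 * k) ^ (2 * k) * Fintype.card V ^ (Fintype.card ι - 1) := by
  set v := Fintype.card ι
  set n := Fintype.card V
  have hkv := add_one_le_card_of_nontrivial hFe hnt
  calc #{f : ι ↪ V | ∀ s ∈ Fe, s.map f ∈ (range τ).image e}
      ≤ τ * (4 ^ v * ((2 * k) ^ (2 * k) * n ^ (v - (k + 1)))) := he.card_copies_le hnt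
    _ ≤ n ^ k * (4 ^ v * ((2 * k) ^ (2 * k) * n ^ (v - (k + 1)))) := by
        gcongr
        exact he.le_choose.trans (Nat.choose_le_pow n k)
    _ = 4 ^ v * (2 * k) ^ (2 * k) * n ^ (v - 1) := by
        rw [show v - 1 = k + (v - (k + 1)) by omega, pow_add]
        ring

theorem eventually_runTime_le_of_nontrivial (hFe : ∀ s ∈ Fe, s.card = k) (hnt : Fe.Nontrivial)
    {ε : ℝ} (hε : 0 < ε) : ∀ᶠ n : ℕ in atTop, ∀ H0 : Set (Finset (Fin n)),
      (runTime k Fe H0 : ℝ) ≤ (turanDensity k Fe + ε) * n.choose k := by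
  classical
  obtain ⟨M, hMex, hvM⟩ : ∃ M, (exNum k Fe M : ℝ) / M.choose k < turanDensity k Fe + ε / 2 ∧
      Fintype.card ι ≤ M :=
    ((tendsto_exNum_div_choose.eventually (gt_mem_nhds (by linarith))).and
      (eventually_ge_atTop _)).exists
  have hkv := add_one_le_card_of_nontrivial hFe hnt
  have hkM : k ≤ M := by omega
  rw [div_lt_iff₀ (by exact_mod_cast Nat.choose_pos hkM)] at hMex
  filter_upwards [eventually_mul_pow_mul_choose_lt (by omega) hvM
    (4 ^ Fintype.card ι * (2 * k) ^ (2 * k)) (half_pos hε)] with n hlt H0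
  by_contra! hτ
  obtain ⟨e, he⟩ := exists_isNewEdgeSeq_runTime (k := k) (Fe := Fe) (H0 := H0)
  have hspans := mul_choose_le_card_spansCopy (Fe := Fe) he.card_eq_of_mem_image hkM hMex.le
    (δ := ε / 2) (by rw [he.card_image, Fintype.card_fin]; linarith)
  have hcopies := (card_spansCopy_le (Fe := Fe) _ hvM).trans
    (Nat.mul_le_mul_right _ (he.card_copies_le_pow hFe hnt))
  simp only [Fintype.card_fin] at hspans hcopies
  have h := hspans.trans (Nat.cast_le.2 hcopies)
  push_cast at h hlt
  linarith

theorem eventually_runTime_le_of_subsingleton (hk : 1 ≤ k) (hFe : Fe.Subsingleton) {ε : ℝ}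
    (hε : 0 < ε) : ∀ᶠ n : ℕ in atTop, ∀ H0 : Set (Finset (Fin n)),
      (runTime k Fe H0 : ℝ) ≤ (turanDensity k Fe + ε) * n.choose k := by
  filter_upwards [eventually_mul_pow_lt_choose hk ε⁻¹, eventually_ge_atTop 1] with n hn hn1 H0
  have hpow : (1 : ℝ) ≤ (n : ℝ) ^ (k - 1) := one_le_pow₀ (by exact_mod_cast hn1)
  have hone : 1 ≤ ε * n.choose k := by
    rw [← inv_mul_le_iff₀ hε, mul_one]
    exact (le_mul_of_one_le_right (inv_nonneg.2 hε.le) hpow).trans hn.le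
  have hrun : runTime k Fe H0 ≤ 1 := runTime_le_one_of_subsingleton hFe
  calc (runTime k Fe H0 : ℝ) ≤ 1 := by exact_mod_cast hrun
    _ ≤ ε * n.choose k := hone
    _ ≤ (turanDensity k Fe + ε) * n.choose k := by
        have := turanDensity_nonneg (k := k) (Fe := Fe)
        gcongr
        linarith

end Final

/-- For every `k ≥ 2`, every `k`-graph `F`, and every `ε > 0`, for all sufficiently
large `n`, `M_F(n) ≤ (π(F) + ε) · C(n,k)`. -/
theorem maxRunTime_le_turanDensity (k : ℕ) (hk : 2 ≤ k) {ι : Type*} [Fintype ι]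
    (Fe : Set (Finset ι)) (hFe : ∀ s ∈ Fe, s.card = k) (ε : ℝ) (hε : 0 < ε) :
    ∃ n₀ : ℕ, ∀ n : ℕ, n₀ ≤ n →
      (maxRunTime k Fe n : ℝ) ≤ (turanDensity k Fe + ε) * (n.choose k : ℝ) := by
  have hrun : ∀ᶠ n : ℕ in atTop, ∀ H0 : Set (Finset (Fin n)),
      (runTime k Fe H0 : ℝ) ≤ (turanDensity k Fe + ε) * n.choose k := by
    rcases Fe.subsingleton_or_nontrivial with h | h
    · exact eventually_runTime_le_of_subsingleton (by omega) h hε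
    · exact eventually_runTime_le_of_nontrivial hFe h hε
  obtain ⟨n₀, hn₀⟩ := eventually_atTop.1 hrun
  exact ⟨n₀, fun n hn => maxRunTime_le fun H0 _ => hn₀ n hn H0⟩
end

section
/- Let (H_i)_{i≥0} be an F-bootstrap percolation process for a k-graph F, and for each step i ∈ [τ] pick an edge e_i ∈ E(H_i) \ E(H_{i-1}), where τ is the running time. Let G be the k-graph with edge set {e_i : i ∈ [τ]}. Then for every copy D of F in G, letting i(D) = max{i : e_i ∈ E(D)}, the edge e_{i(D)-1} is also an edge of D. -/
open Finset Set Filter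

lemma procSeq_mono_aux {ι V : Type*} (k : ℕ) (Fe : Set (Finset ι)) (H0 : Set (Finset V))
    {i j : ℕ} (h : i ≤ j) : procSeq k Fe H0 i ⊆ procSeq k Fe H0 j := by
  induction j with
  | zero => simp_all
  | succ j ih =>
    rcases Nat.le_succ_iff_eq_or_le.mp h with h' | h'
    · subst h'; rfl
    · exact (ih h').trans Set.subset_union_left

/-- In an `F`-process with chosen new edges `e_i` forming the hypergraph `G`, for every
copy `D` of `F` in `G` (given by an embedding `f`), with `i(D)` the largest index of a
chosen edge of `D`, the edge `e_{i(D)−1}` is also an edge of `D`. -/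
theorem prev_chosen_edge_mem_copy (k : ℕ) {ι : Type*} [Fintype ι] (Fe : Set (Finset ι))
    (hFe : ∀ s ∈ Fe, s.card = k) (hcard : 2 ≤ Fe.ncard) {n : ℕ}
    (H0 : Set (Finset (Fin n))) (hH0 : ∀ s ∈ H0, s.card = k)
    (e : ℕ → Finset (Fin n)) (τ : ℕ) (hτ : τ = runTime k Fe H0)
    (he : ∀ i : ℕ, 1 ≤ i → i ≤ τ →
      e i ∈ procSeq k Fe H0 i \ procSeq k Fe H0 (i - 1))
    (f : ι ↪ Fin n) (hf : ∀ s ∈ Fe, s.map f ∈ e '' Set.Icc 1 τ) :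
    e (idxMax e τ ((fun s => s.map f) '' Fe) - 1) ∈ (fun s => s.map f) '' Fe := by
  classical
  set Ed : Set (Finset (Fin n)) := (fun s => s.map f) '' Fe with hEd
  set S : Set ℕ := {i | i ∈ Set.Icc 1 τ ∧ e i ∈ Ed} with hS
  have hbdd : BddAbove S := ⟨τ, fun i hi => hi.1.2⟩
  -- two distinct edges of the copy
  obtain ⟨s1, hs1, s2, hs2, hne⟩ : ∃ s1 ∈ Fe, ∃ s2 ∈ Fe, s1 ≠ s2 := by
    have h1 : 1 < Fe.ncard := hcard
    rw [Set.one_lt_ncard_iff (by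
      by_contra hfin
      simp [Set.Infinite.ncard (fun h => hfin h)] at h1)] at h1
    obtain ⟨a, b, ha, hb, hab⟩ := h1
    exact ⟨a, ha, b, hb, hab⟩
  obtain ⟨j1, hj1, hej1⟩ := hf s1 hs1
  obtain ⟨j2, hj2, hej2⟩ := hf s2 hs2
  have hmemEd : ∀ {s : Finset ι}, s ∈ Fe → s.map f ∈ Ed := fun hs => ⟨_, hs, rfl⟩
  have hj1S : j1 ∈ S := ⟨hj1, by rw [hej1]; exact hmemEd hs1⟩
  have hj2S : j2 ∈ S := ⟨hj2, by rw [hej2]; exact hmemEd hs2⟩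
  have hSne : S.Nonempty := ⟨j1, hj1S⟩
  have hM_mem : idxMax e τ Ed ∈ S := Nat.sSup_mem hSne hbdd
  set M := idxMax e τ Ed with hMdef
  have hM1 : 1 ≤ M := hM_mem.1.1
  have hMτ : M ≤ τ := hM_mem.1.2
  have hle : ∀ {j : ℕ}, j ∈ S → j ≤ M := fun hj => le_csSup hbdd hj
  -- M ≥ 2
  have hM2 : 2 ≤ M := by
    have hj12 : j1 ≠ j2 := by
      intro h
      apply hne
      apply Finset.map_injective f
      rw [← hej1, ← hej2, h]
    rcases Nat.lt_or_ge M 2 with h | h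
    · interval_cases M
      · exact absurd (Nat.le_antisymm (hle hj1S) hj1S.1.1) (by
          intro h1; exact hj12 (h1.trans (Nat.le_antisymm (hle hj2S) hj2S.1.1).symm))
    · exact h
  by_contra hcon
  -- every edge of the copy other than e M is in procSeq (M-2)
  have hkey : ∀ s ∈ Fe, s.map f ∈ procSeq k Fe H0 (M - 2) ∪ {e M} := by
    intro s hs
    obtain ⟨j, hj, hej⟩ := hf s hs
    have hjS : j ∈ S := ⟨hj, by rw [hej]; exact hmemEd hs⟩
    have hjM : j ≤ M := hle hjS
    rcases eq_or_lt_of_le hjM with h | h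
    · right; rw [← hej, h]; rfl
    · left
      have hjM1 : j ≠ M - 1 := by
        intro hEq
        exact hcon (by rw [← hEq, hej]; exact hmemEd hs)
      have hjM2 : j ≤ M - 2 := by omega
      have := (he j hjS.1.1 hjS.1.2).1
      rw [← hej]
      exact procSeq_mono_aux k Fe H0 hjM2 this
  -- e M satisfies the bootstrap condition at step M-1
  obtain ⟨sM, hsM, hesM⟩ : ∃ s ∈ Fe, s.map f = e M := by
    obtain ⟨s, hs, hes⟩ := hM_mem.2
    exact ⟨s, hs, hes⟩
  have hcardM : (e M).card = k := by rw [← hesM, Finset.card_map]; exact hFe sM hsM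
  have hMem : e M ∈ procSeq k Fe H0 (M - 1) := by
    have hstep : M - 1 = (M - 2) + 1 := by omega
    rw [hstep]
    show e M ∈ bootStep k Fe (procSeq k Fe H0 (M - 2))
    right
    exact ⟨hcardM, f, hkey, sM, hsM, hesM⟩
  exact (he M hM1 hMτ).2 hMem
end
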